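/- Let m ≥ 3 and let (𝒜₁,…,𝒜_m; 𝒳) be a net in ℙ²(ℂ) (each 𝒜_i nonempty), and set d = |𝒜₁|. Then |𝒳| = d². -/
import Mathlib


open scoped LinearAlgebra.Projectivization

/-- The complex projective plane, as the projectivization of `ℂ³`. -/
abbrev P2 : Type := ℙ ℂ (Fin 3 → ℂ)

/-- A line in `ℙ²(ℂ)`: the set of points corresponding to the nonzero vectors of a
2-dimensional linear subspace of `ℂ³`. -/
def IsLine (L : Set P2) : Prop :=
  ∃ W : Submodule ℂ (Fin 3 → ℂ), Module.finrank ℂ W = 2 ∧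
    L = {p : P2 | Projectivization.submodule p ≤ W}

/-- An `(m,d)`-net in `ℙ²(ℂ)`: `m` pairwise disjoint sets of lines, each of cardinality `d`,
together with a finite set `X` of points, such that every point of `X` lies on exactly one
line of each class, and every intersection point of lines from two different classes lies
in `X`. -/
structure IsNet (m d : ℕ) (A : Fin m → Finset (Set P2)) (X : Finset P2) : Prop where
  isLine : ∀ i, ∀ L ∈ A i, IsLine L
  disjoint : ∀ i j, i ≠ j → Disjoint (A i) (A j)
  card_eq : ∀ i, (A i).card = d
  point_line : ∀ x ∈ X, ∀ i, ∃! L, L ∈ A i ∧ x ∈ L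
  inter_mem : ∀ i j, i ≠ j → ∀ L ∈ A i, ∀ L' ∈ A j, ∀ x, x ∈ L → x ∈ L' → x ∈ X

/-- A net in `ℙ²(ℂ)` (with no assumption on the cardinalities of the classes, but each
class nonempty): `m` pairwise disjoint nonempty finite sets of lines together with a finite
set `X` of points such that every point of `X` lies on exactly one line of each class, and
every intersection point of lines from two different classes lies in `X`. -/
structure IsGenNet (m : ℕ) (A : Fin m → Finset (Set P2)) (X : Finset P2) : Prop where
  isLine : ∀ i, ∀ L ∈ A i, IsLine L
  disjoint : ∀ i j, i ≠ j → Disjoint (A i) (A j)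
  nonempty : ∀ i, (A i).Nonempty
  point_line : ∀ x ∈ X, ∀ i, ∃! L, L ∈ A i ∧ x ∈ L
  inter_mem : ∀ i j, i ≠ j → ∀ L ∈ A i, ∀ L' ∈ A j, ∀ x, x ∈ L → x ∈ L' → x ∈ X


lemma lines_inter {L L' : Set P2} (hL : IsLine L) (hL' : IsLine L') (hne : L ≠ L') :
    ∃! x : P2, x ∈ L ∧ x ∈ L' := by
  obtain ⟨W, hW2, rfl⟩ := hL
  obtain ⟨W', hW'2, rfl⟩ := hL'
  have hWW' : W ≠ W' := fun h => hne (by rw [h])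
  have h3 : Module.finrank ℂ (Fin 3 → ℂ) = 3 := by simp
  have hsum := Submodule.finrank_sup_add_finrank_inf_eq W W'
  have hle3 : Module.finrank ℂ ↥(W ⊔ W') ≤ 3 :=
    le_trans (Submodule.finrank_le _) (le_of_eq h3)
  have hne2 : Module.finrank ℂ ↥(W ⊓ W') ≠ 2 := by
    intro h2
    have : W ⊓ W' = W := Submodule.eq_of_le_of_finrank_eq inf_le_left (by rw [h2, hW2])
    have hWle : W ≤ W' := by rw [← this]; exact inf_le_right
    exact hWW' (Submodule.eq_of_le_of_finrank_eq hWle (by rw [hW2, hW'2]))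
  have hmono : Module.finrank ℂ ↥(W ⊓ W') ≤ 2 := hW2 ▸ Submodule.finrank_mono inf_le_left
  have h1 : Module.finrank ℂ ↥(W ⊓ W') = 1 := by omega
  refine ⟨Projectivization.mk'' (W ⊓ W') h1, ?_, ?_⟩
  · constructor <;> rw [Set.mem_setOf_eq, Projectivization.submodule_mk'']
    · exact inf_le_left
    · exact inf_le_right
  · rintro y ⟨hy1, hy2⟩
    apply Projectivization.submodule_injective
    rw [Projectivization.submodule_mk'']
    exact Submodule.eq_of_le_of_finrank_eq (le_inf hy1 hy2)
      (by rw [Projectivization.finrank_submodule, h1])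

lemma net_card_mul {m : ℕ} {A : Fin m → Finset (Set P2)} {X : Finset P2}
    (h : IsGenNet m A X) (i j : Fin m) (hij : i ≠ j) :
    X.card = (A i).card * (A j).card := by
  rw [← Finset.card_product]
  refine Finset.card_bij
    (fun x hx => ((h.point_line x hx i).exists.choose, (h.point_line x hx j).exists.choose))
    ?_ ?_ ?_
  · intro x hx
    have hi := (h.point_line x hx i).exists.choose_spec
    have hj := (h.point_line x hx j).exists.choose_spec
    exact Finset.mem_product.2 ⟨hi.1, hj.1⟩
  · intro x hx y hy heq
    have hxi := (h.point_line x hx i).exists.choose_spec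
    have hxj := (h.point_line x hx j).exists.choose_spec
    have hyi := (h.point_line y hy i).exists.choose_spec
    have hyj := (h.point_line y hy j).exists.choose_spec
    rw [Prod.mk.injEq] at heq
    set L := (h.point_line x hx i).exists.choose
    set L' := (h.point_line x hx j).exists.choose
    have hLne : L ≠ L' := by
      intro hE
      exact (Finset.disjoint_left.1 (h.disjoint i j hij)) hxi.1 (hE ▸ hxj.1)
    have huniq := lines_inter (h.isLine i L hxi.1) (h.isLine j L' hxj.1) hLne
    exact huniq.unique ⟨hxi.2, hxj.2⟩ ⟨heq.1 ▸ hyi.2, heq.2 ▸ hyj.2⟩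
  · rintro ⟨L, L'⟩ hmem
    rw [Finset.mem_product] at hmem
    have hLne : L ≠ L' := by
      intro hE
      exact (Finset.disjoint_left.1 (h.disjoint i j hij)) hmem.1 (hE ▸ hmem.2)
    obtain ⟨x, ⟨hxL, hxL'⟩, -⟩ := lines_inter (h.isLine i L hmem.1) (h.isLine j L' hmem.2) hLne
    have hxX : x ∈ X := h.inter_mem i j hij L hmem.1 L' hmem.2 x hxL hxL'
    refine ⟨x, hxX, ?_⟩
    have hi := (h.point_line x hxX i).exists.choose_spec
    have hj := (h.point_line x hxX j).exists.choose_spec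
    have e1 := (h.point_line x hxX i).unique hi ⟨hmem.1, hxL⟩
    have e2 := (h.point_line x hxX j).unique hj ⟨hmem.2, hxL'⟩
    simp [e1, e2]

/-- In a net in `ℙ²(ℂ)` with `m ≥ 3` classes, if `d` is the cardinality of the first class
then `|𝒳| = d²`. -/
theorem genNet_card_points (m : ℕ) (hm : 3 ≤ m)
    (A : Fin m → Finset (Set P2)) (X : Finset P2) (h : IsGenNet m A X)
    (d : ℕ) (hd : d = (A ⟨0, by omega⟩).card) :
    X.card = d ^ 2 := by
  have i0 : Fin m := ⟨0, by omega⟩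
  have h01 : (⟨0, by omega⟩ : Fin m) ≠ ⟨1, by omega⟩ := by simp [Fin.ext_iff]
  have h02 : (⟨0, by omega⟩ : Fin m) ≠ ⟨2, by omega⟩ := by simp [Fin.ext_iff]
  have h12 : (⟨1, by omega⟩ : Fin m) ≠ ⟨2, by omega⟩ := by simp [Fin.ext_iff]
  set a := (A ⟨0, by omega⟩).card with ha
  set b := (A ⟨1, by omega⟩).card with hb
  set c := (A ⟨2, by omega⟩).card with hc
  have e1 : X.card = a * b := net_card_mul h _ _ h01
  have e2 : X.card = a * c := net_card_mul h _ _ h02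
  have e3 : X.card = b * c := net_card_mul h _ _ h12
  have hapos : 0 < a := Finset.card_pos.2 (h.nonempty _)
  have hcpos : 0 < c := Finset.card_pos.2 (h.nonempty _)
  have hbc : b = c := Nat.eq_of_mul_eq_mul_left hapos (e1 ▸ e2)
  have hab : a = b := Nat.eq_of_mul_eq_mul_right hcpos (by rw [← e2, ← e3])
  rw [hd, e1, ← hab, sq]
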